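/- arXiv:solv-int/9909009 — 11 statements merged into one kernel-verified Lean document; each statement's English description precedes it below -/
import Mathlib

section
/- Let J be a real symmetric n×n matrix and let Ω, M, P : ℝ → Matₙ(ℝ) be differentiable matrix-valued functions satisfying M(t) = JΩ(t) + Ω(t)J, Ṁ = [M,Ω] + [P,J], and Ṗ = [P,Ω] for all t. Then for every λ ∈ ℝ, the matrix L(t) := P(t) + λM(t) + λ²J² satisfies the Lax equation L̇(t) = [L(t), B(t)], where B(t) := Ω(t) + λJ. -/
open Matrix

/-- In powers of `c`, the `c²` coefficient `[M, J] + [J², Ω]` vanishes because `M = JΩ + ΩJ`,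
and the `c³` coefficient is `[J², J] = 0`. -/
theorem lax_commutator_eq {K A : Type*} [CommRing K] [Ring A] [Algebra K A]
    {J Ω M : A} (P : A) (hM : M = J * Ω + Ω * J) (c : K) :
    (P + c • M + c ^ 2 • J ^ 2) * (Ω + c • J) - (Ω + c • J) * (P + c • M + c ^ 2 • J ^ 2)
      = (P * Ω - Ω * P) + c • (M * Ω - Ω * M + (P * J - J * P)) := by
  subst hM
  simp only [mul_add, add_mul, smul_mul_assoc, mul_smul_comm, smul_add, smul_sub, smul_smul]
  noncomm_ring

theorem HasDerivAt.matrix_entry_add_smul_add_const {𝕜 m n : Type*} [NontriviallyNormedField 𝕜]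
    {P M : 𝕜 → Matrix m n 𝕜} {P' M' : Matrix m n 𝕜} {t : 𝕜} {i : m} {j : n}
    (hP : HasDerivAt (fun s => P s i j) (P' i j) t)
    (hM : HasDerivAt (fun s => M s i j) (M' i j) t) (c : 𝕜) (C : Matrix m n 𝕜) :
    HasDerivAt (fun s => (P s + c • M s + C) i j) ((P' + c • M') i j) t := by
  simpa using (hP.add (hM.const_mul c)).add_const (C i j)

theorem stmt_1_general (n : ℕ) (J : Matrix (Fin n) (Fin n) ℝ)
    (Ω M P : ℝ → Matrix (Fin n) (Fin n) ℝ)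
    (hMdef : ∀ t, M t = J * Ω t + Ω t * J)
    (hM : ∀ t, ∀ i j, HasDerivAt (fun s => M s i j)
      ((M t * Ω t - Ω t * M t + (P t * J - J * P t)) i j) t)
    (hP : ∀ t, ∀ i j, HasDerivAt (fun s => P s i j)
      ((P t * Ω t - Ω t * P t) i j) t)
    (lam : ℝ) :
    ∀ t, ∀ i j, HasDerivAt (fun s => (P s + lam • M s + (lam ^ 2) • J ^ 2) i j)
      (((P t + lam • M t + (lam ^ 2) • J ^ 2) * (Ω t + lam • J)
        - (Ω t + lam • J) * (P t + lam • M t + (lam ^ 2) • J ^ 2)) i j) t := by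
  intro t i j
  rw [lax_commutator_eq (P t) (hMdef t) lam]
  exact (hP t i j).matrix_entry_add_smul_add_const (hM t i j) lam (lam ^ 2 • J ^ 2)

/-- Let `J` be a real symmetric `n × n` matrix and `Ω, M, P : ℝ → Matₙ(ℝ)` differentiable
matrix functions satisfying `M = JΩ + ΩJ`, `Ṁ = [M,Ω] + [P,J]`, `Ṗ = [P,Ω]`.
Then for every `λ ∈ ℝ`, the matrix `L(t) = P(t) + λ M(t) + λ² J²` satisfies the Lax
equation `L̇ = [L, B]` with `B(t) = Ω(t) + λ J`. -/
theorem stmt_1 (n : ℕ) (J : Matrix (Fin n) (Fin n) ℝ) (hJ : Jᵀ = J)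
    (Ω M P : ℝ → Matrix (Fin n) (Fin n) ℝ)
    (hΩ : ∀ i j, Differentiable ℝ fun t => Ω t i j)
    (hMdef : ∀ t, M t = J * Ω t + Ω t * J)
    (hM : ∀ t, ∀ i j, HasDerivAt (fun s => M s i j)
      ((M t * Ω t - Ω t * M t + (P t * J - J * P t)) i j) t)
    (hP : ∀ t, ∀ i j, HasDerivAt (fun s => P s i j)
      ((P t * Ω t - Ω t * P t) i j) t)
    (lam : ℝ) :
    ∀ t, ∀ i j, HasDerivAt (fun s => (P s + lam • M s + (lam ^ 2) • J ^ 2) i j)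
      (((P t + lam • M t + (lam ^ 2) • J ^ 2) * (Ω t + lam • J)
        - (Ω t + lam • J) * (P t + lam • M t + (lam ^ 2) • J ^ 2)) i j) t :=
  stmt_1_general n J Ω M P hMdef hM hP lam
end

section
/- Let L, B : ℝ → Matₙ(ℝ) be matrix-valued functions with L differentiable, and suppose L̇(t) = L(t)B(t) − B(t)L(t) for all t ∈ ℝ. Then the characteristic polynomial of L(t) is independent of t, i.e., for all t₀, t₁ ∈ ℝ, charpoly(L(t₀)) = charpoly(L(t₁)). -/
/-!
By Jacobi's formula, a solution of `L' = L B - B L` has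
`(det L)' = tr (adj L * (L B - B L)) = tr (L adj L * B) - tr (adj L L * B) = 0`,
because `L adj L = adj L L = det L • 1`. Since scalars commute with `B`,
`x • 1 - L` solves the same Lax equation, so every value
`charpoly (L t) (x) = det (x • 1 - L t)` is independent of `t`.
-/

open Matrix Polynomial Finset

namespace Matrix

variable {ι R : Type*} [Fintype ι] [DecidableEq ι]

theorem det_updateCol_eq_sum_perm [CommRing R] (M : Matrix ι ι R) (i : ι) (v : ι → R) :
    (M.updateCol i v).det
      = ∑ σ : Equiv.Perm ι,
          (Equiv.Perm.sign σ : R) * ((∏ j ∈ univ.erase i, M (σ j) j) * v (σ i)) := by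
  rw [det_apply']
  refine sum_congr rfl fun σ _ => ?_
  rw [← mul_prod_erase _ _ (mem_univ i), mul_comm (updateCol M i v (σ i) i),
    updateCol_self]
  congr 2
  exact prod_congr rfl fun j hj => updateCol_ne (ne_of_mem_erase hj)

theorem sum_det_updateCol_eq_trace_adjugate_mul [CommRing R] (M N : Matrix ι ι R) :
    ∑ i, (M.updateCol i fun k => N k i).det = trace (M.adjugate * N) := by
  simp only [← cramer_apply, cramer_eq_adjugate_mulVec, trace, diag, mul_apply, mulVec,
    dotProduct]

theorem trace_adjugate_mul_commutator_eq_zero [CommRing R] (M B : Matrix ι ι R) :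
    trace (M.adjugate * (M * B - B * M)) = 0 := by
  rw [mul_sub, trace_sub, ← mul_assoc, adjugate_mul, ← mul_assoc,
    trace_mul_comm (M.adjugate * B) M, ← mul_assoc, mul_adjugate, sub_self]

theorem hasDerivAt_det {𝕜 : Type*} [NontriviallyNormedField 𝕜] {A : 𝕜 → Matrix ι ι 𝕜}
    {A' : Matrix ι ι 𝕜} {t : 𝕜}
    (hA : ∀ i j, HasDerivAt (fun s => A s i j) (A' i j) t) :
    HasDerivAt (fun s => (A s).det) (trace ((A t).adjugate * A')) t := by
  have hterm (σ : Equiv.Perm ι) : HasDerivAt (fun s => ∏ i, A s (σ i) i)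
      (∑ i, (∏ j ∈ univ.erase i, A t (σ j) j) * A' (σ i) i) t :=
    HasDerivAt.fun_finsetProd fun i _ => hA (σ i) i
  rw [← sum_det_updateCol_eq_trace_adjugate_mul]
  simp only [det_updateCol_eq_sum_perm, det_apply' (A _)]
  rw [sum_comm]
  simp only [← mul_sum]
  exact HasDerivAt.fun_sum fun σ _ => (hterm σ).const_mul _

theorem det_eq_of_hasDerivAt_commutator {𝕜 : Type*} [RCLike 𝕜] {L B : 𝕜 → Matrix ι ι 𝕜}
    (hL : ∀ t, ∀ i j, HasDerivAt (fun s => L s i j) ((L t * B t - B t * L t) i j) t)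
    (t₀ t₁ : 𝕜) : (L t₀).det = (L t₁).det := by
  have hdet (t : 𝕜) : HasDerivAt (fun s => (L s).det) 0 t := by
    simpa only [trace_adjugate_mul_commutator_eq_zero] using hasDerivAt_det (hL t)
  exact is_const_of_deriv_eq_zero (fun t => (hdet t).differentiableAt) (fun t => (hdet t).deriv)
    t₀ t₁

end Matrix

/-- If `L, B : ℝ → Matₙ(ℝ)` with `L` differentiable and `L̇ = L B − B L`, then the
characteristic polynomial of `L(t)` is independent of `t`. -/
theorem stmt_2 (n : ℕ) (L B : ℝ → Matrix (Fin n) (Fin n) ℝ)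
    (hL : ∀ t, ∀ i j, HasDerivAt (fun s => L s i j)
      ((L t * B t - B t * L t) i j) t) :
    ∀ t₀ t₁ : ℝ, (L t₀).charpoly = (L t₁).charpoly := by
  intro t₀ t₁
  refine Polynomial.funext fun x => ?_
  simp only [eval_charpoly]
  refine det_eq_of_hasDerivAt_commutator (L := fun s => scalar (Fin n) x - L s) (B := B)
    (fun t i j => ?_) t₀ t₁
  have hcomm : (scalar (Fin n) x - L t) * B t - B t * (scalar (Fin n) x - L t)
      = -(L t * B t - B t * L t) := by
    rw [sub_mul, mul_sub, (scalar_commute x (fun _ => mul_comm _ _) (B t)).eq]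
    abel
  rw [hcomm]
  exact (hL t i j).const_sub _
end

section
/- Let J be a real symmetric n×n matrix and let Ω, M, P : ℝ → Matₙ(ℝ) be differentiable matrix-valued functions satisfying M(t) = JΩ(t) + Ω(t)J, Ṁ = [M,Ω] + [P,J], and Ṗ = [P,Ω] for all t. Then for every λ ∈ ℝ and all t₀, t₁ ∈ ℝ, charpoly(P(t₀) + λM(t₀) + λ²J²) = charpoly(P(t₁) + λM(t₁) + λ²J²); that is, the spectral invariants of the Lax matrix L(λ) = P + λM + λ²J² are integrals of motion of the rigid body in a quadratic potential. -/
/-!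
Along the flow the Lax matrix `L(λ) = P + λM + λ²J²` satisfies the Lax equation
`L̇ = [L, A]` with `A = Ω + λJ`. By Jacobi's formula the derivative of `det (x - L)` is then
`-tr (adj (x - L) · [L, A])`, which vanishes because `adj (x - L)` commutes with `L`; so every
value of the characteristic polynomial is constant in time.
-/

open Matrix

variable {ι : Type*} [Fintype ι]

theorem Matrix.trace_mul_commutator_eq_zero {R : Type*} [CommRing R] {B L : Matrix ι ι R}
    (hBL : Commute B L) (A : Matrix ι ι R) : (B * (L * A - A * L)).trace = 0 := by
  have hcyc : (B * (L * A)).trace = (B * (A * L)).trace := by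
    calc (B * (L * A)).trace = (L * (B * A)).trace := by rw [← mul_assoc, hBL.eq, mul_assoc]
      _ = (B * A * L).trace := trace_mul_comm _ _
      _ = (B * (A * L)).trace := by rw [mul_assoc]
  rw [mul_sub, trace_sub, hcyc, sub_self]

variable [DecidableEq ι]

theorem Matrix.det_updateCol_eq_sum_adjugate_mul {R : Type*} [CommRing R] (A : Matrix ι ι R)
    (j : ι) (v : ι → R) : (A.updateCol j v).det = ∑ i, A.adjugate j i * v i := by
  rw [← cramer_apply, cramer_eq_adjugate_mulVec]
  rfl

theorem Matrix.hasDerivAt_det_s3 {𝕜 : Type*} [NontriviallyNormedField 𝕜] {A : 𝕜 → Matrix ι ι 𝕜}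
    {A' : Matrix ι ι 𝕜} {t : 𝕜} (h : ∀ i j, HasDerivAt (fun s => A s i j) (A' i j) t) :
    HasDerivAt (fun s => (A s).det) ((A t).adjugate * A').trace t := by
  have hLeibniz : HasDerivAt (fun s => (A s).det)
      (∑ σ : Equiv.Perm ι, (Equiv.Perm.sign σ : 𝕜) *
        ∑ j, (∏ k ∈ Finset.univ.erase j, A t (σ k) k) • A' (σ j) j) t := by
    simp only [det_apply']
    exact HasDerivAt.fun_sum fun σ _ =>
      (HasDerivAt.fun_finsetProd fun j _ => h (σ j) j).const_mul _
  convert hLeibniz using 1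
  have hcols : ((A t).adjugate * A').trace = ∑ j, ((A t).updateCol j fun i => A' i j).det := by
    simp only [trace, diag, mul_apply, det_updateCol_eq_sum_adjugate_mul]
  simp only [hcols, Finset.mul_sum]
  rw [Finset.sum_comm]
  refine Finset.sum_congr rfl fun j _ => ?_
  rw [det_apply']
  refine Finset.sum_congr rfl fun σ _ => ?_
  rw [← Finset.mul_prod_erase Finset.univ _ (Finset.mem_univ j),
    Finset.prod_congr rfl fun k hk => updateCol_ne (Finset.ne_of_mem_erase hk)]
  simp only [updateCol_self, smul_eq_mul]
  ring

theorem Matrix.commute_adjugate_scalar_sub {R : Type*} [CommRing R] (L : Matrix ι ι R) (x : R) :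
    Commute (scalar ι x - L).adjugate L := by
  have hself : Commute (scalar ι x - L).adjugate (scalar ι x - L) :=
    (adjugate_mul _).trans (mul_adjugate _).symm
  simpa using ((scalar_commute x (Commute.all x) _).symm.sub_right hself)

theorem Matrix.charpoly_eq_of_hasDerivAt_commutator {𝕜 : Type*} [RCLike 𝕜]
    {L A : 𝕜 → Matrix ι ι 𝕜}
    (hL : ∀ t i j, HasDerivAt (fun s => L s i j) ((L t * A t - A t * L t) i j) t) (t₀ t₁ : 𝕜) :
    (L t₀).charpoly = (L t₁).charpoly := by
  refine Polynomial.funext fun x => ?_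
  simp only [eval_charpoly]
  have hdet : ∀ t, HasDerivAt (fun s => (scalar ι x - L s).det) 0 t := by
    intro t
    have hentry : ∀ i j, HasDerivAt (fun s => (scalar ι x - L s) i j)
        ((-(L t * A t - A t * L t)) i j) t :=
      fun i j => by simpa only [Matrix.sub_apply, Matrix.neg_apply] using (hL t i j).const_sub _
    convert hasDerivAt_det_s3 hentry using 1
    rw [mul_neg, trace_neg, trace_mul_commutator_eq_zero (commute_adjugate_scalar_sub _ x),
      neg_zero]
  exact is_const_of_deriv_eq_zero (fun t => (hdet t).differentiableAt)
    (fun t => (hdet t).deriv) t₀ t₁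

theorem rigidBody_lax_equation {R 𝒜 : Type*} [CommRing R] [Ring 𝒜] [Algebra R 𝒜]
    (J Ω M P : 𝒜) (hM : M = J * Ω + Ω * J) (lam : R) :
    (P * Ω - Ω * P) + lam • (M * Ω - Ω * M + (P * J - J * P))
      = (P + lam • M + lam ^ 2 • J ^ 2) * (Ω + lam • J)
        - (Ω + lam • J) * (P + lam • M + lam ^ 2 • J ^ 2) := by
  subst hM
  simp only [mul_add, add_mul, smul_add, smul_sub, smul_mul_assoc,
    mul_smul_comm, smul_smul, pow_two, mul_assoc]
  module

theorem stmt_3_general (n : ℕ) (J : Matrix (Fin n) (Fin n) ℝ)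
    (Ω M P : ℝ → Matrix (Fin n) (Fin n) ℝ)
    (hMdef : ∀ t, M t = J * Ω t + Ω t * J)
    (hM : ∀ t, ∀ i j, HasDerivAt (fun s => M s i j)
      ((M t * Ω t - Ω t * M t + (P t * J - J * P t)) i j) t)
    (hP : ∀ t, ∀ i j, HasDerivAt (fun s => P s i j)
      ((P t * Ω t - Ω t * P t) i j) t)
    (lam : ℝ) :
    ∀ t₀ t₁ : ℝ, (P t₀ + lam • M t₀ + (lam ^ 2) • J ^ 2).charpoly
      = (P t₁ + lam • M t₁ + (lam ^ 2) • J ^ 2).charpoly := by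
  refine charpoly_eq_of_hasDerivAt_commutator (A := fun t => Ω t + lam • J) fun t i j => ?_
  rw [← rigidBody_lax_equation J (Ω t) (M t) (P t) (hMdef t)]
  simpa only [Matrix.add_apply, Matrix.sub_apply, Matrix.smul_apply, smul_eq_mul,
    Pi.add_apply] using
    ((hP t i j).add ((hM t i j).const_mul lam)).add_const (lam ^ 2 * (J ^ 2) i j)

/-- For the rigid body in a quadratic potential (`M = JΩ + ΩJ`, `Ṁ = [M,Ω] + [P,J]`,
`Ṗ = [P,Ω]`, `J` symmetric), the spectral invariants of the Lax matrix
`L(λ) = P + λM + λ²J²` are integrals of motion: its characteristic polynomial is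
independent of time. -/
theorem stmt_3 (n : ℕ) (J : Matrix (Fin n) (Fin n) ℝ) (hJ : Jᵀ = J)
    (Ω M P : ℝ → Matrix (Fin n) (Fin n) ℝ)
    (hΩ : ∀ i j, Differentiable ℝ fun t => Ω t i j)
    (hMdef : ∀ t, M t = J * Ω t + Ω t * J)
    (hM : ∀ t, ∀ i j, HasDerivAt (fun s => M s i j)
      ((M t * Ω t - Ω t * M t + (P t * J - J * P t)) i j) t)
    (hP : ∀ t, ∀ i j, HasDerivAt (fun s => P s i j)
      ((P t * Ω t - Ω t * P t) i j) t)
    (lam : ℝ) :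
    ∀ t₀ t₁ : ℝ, (P t₀ + lam • M t₀ + (lam ^ 2) • J ^ 2).charpoly
      = (P t₁ + lam • M t₁ + (lam ^ 2) • J ^ 2).charpoly :=
  stmt_3_general n J Ω M P hMdef hM hP lam
end

section
/- Let J be a real symmetric n×n matrix and let Ω, P : ℝ → Matₙ(ℝ) be differentiable, set M(t) := JΩ(t) + Ω(t)J, and suppose Ṁ = [M,Ω] + [P,J] and Ṗ = [P,Ω] for all t. Then the energy function H(t) := −(1/4)·tr(M(t)Ω(t)) − (1/2)·tr(J P(t)) is constant in t. -/
/-!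
Since `M = JΩ + ΩJ` is linear in `Ω`, cyclicity of the trace gives `tr(M Ω̇) = tr(Ṁ Ω)`, so
`d/dt tr(MΩ) = 2 tr(ṀΩ) = 2 tr([P,J] Ω)`, the term `tr([M,Ω] Ω)` vanishing again by cyclicity.
On the other hand `d/dt tr(JP) = tr(J [P,Ω]) = -tr([P,J] Ω)`, so the two contributions to `Ḣ`
cancel.
-/

open Matrix

namespace Matrix

section EntrywiseDeriv

variable {𝕜 : Type*} [NontriviallyNormedField 𝕜] {l m n : Type*}

/-- Matrices carry no global norm, so derivatives of matrix-valued curves are taken entrywise. -/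
def HasEntrywiseDerivAt (A : 𝕜 → Matrix m n 𝕜) (A' : Matrix m n 𝕜) (t : 𝕜) : Prop :=
  ∀ i j, HasDerivAt (fun s => A s i j) (A' i j) t

theorem hasEntrywiseDerivAt_const (C : Matrix m n 𝕜) (t : 𝕜) :
    HasEntrywiseDerivAt (fun _ => C) 0 t :=
  fun i j => hasDerivAt_const t (C i j)

theorem hasEntrywiseDerivAt_deriv {A : 𝕜 → Matrix m n 𝕜} {t : 𝕜}
    (hA : ∀ i j, DifferentiableAt 𝕜 (fun s => A s i j) t) :
    HasEntrywiseDerivAt A (of fun i j => deriv (fun s => A s i j) t) t :=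
  fun i j => (hA i j).hasDerivAt

namespace HasEntrywiseDerivAt

variable {A B : 𝕜 → Matrix m n 𝕜} {A' B' : Matrix m n 𝕜} {t : 𝕜}

theorem unique (hA : HasEntrywiseDerivAt A A' t) (hB : HasEntrywiseDerivAt A B' t) : A' = B' :=
  ext fun i j => (hA i j).unique (hB i j)

theorem add (hA : HasEntrywiseDerivAt A A' t) (hB : HasEntrywiseDerivAt B B' t) :
    HasEntrywiseDerivAt (fun s => A s + B s) (A' + B') t :=
  fun i j => (hA i j).add (hB i j)

theorem mul [Fintype m] {A : 𝕜 → Matrix l m 𝕜} {B : 𝕜 → Matrix m n 𝕜} {A' : Matrix l m 𝕜}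
    {B' : Matrix m n 𝕜} (hA : HasEntrywiseDerivAt A A' t) (hB : HasEntrywiseDerivAt B B' t) :
    HasEntrywiseDerivAt (fun s => A s * B s) (A' * B t + A t * B') t := by
  intro i j
  simp only [add_apply, mul_apply, ← Finset.sum_add_distrib]
  exact .fun_sum fun k _ => (hA i k).mul (hB k j)

theorem trace [Fintype n] {A : 𝕜 → Matrix n n 𝕜} {A' : Matrix n n 𝕜}
    (hA : HasEntrywiseDerivAt A A' t) : HasDerivAt (fun s => (A s).trace) A'.trace t :=
  HasDerivAt.fun_sum fun i _ => hA i i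

end HasEntrywiseDerivAt

end EntrywiseDeriv

section TraceIdentities

variable {R : Type*} [CommRing R] {n : Type*} [Fintype n]

theorem trace_anticommutator_mul_comm (J A B : Matrix n n R) :
    ((J * A + A * J) * B).trace = ((J * B + B * J) * A).trace := by
  simp only [add_mul, trace_add, mul_assoc]
  rw [trace_mul_comm A, trace_mul_comm B, mul_assoc, mul_assoc, add_comm]

theorem trace_commutator_mul_self (M A : Matrix n n R) : ((M * A - A * M) * A).trace = 0 := by
  rw [sub_mul, trace_sub, trace_mul_cycle, sub_self]

theorem trace_mul_commutator (J P A : Matrix n n R) :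
    (J * (P * A - A * P)).trace = -((P * J - J * P) * A).trace := by
  simp only [mul_sub, sub_mul, trace_sub, ← mul_assoc]
  rw [trace_mul_cycle J A P, trace_mul_cycle P J A]
  ring

end TraceIdentities

end Matrix

theorem hasDerivAt_rigidBody_energy {n : Type*} [Fintype n] {J : Matrix n n ℝ}
    {Ω P : ℝ → Matrix n n ℝ} {W : Matrix n n ℝ} {t : ℝ}
    (hΩ : HasEntrywiseDerivAt Ω W t)
    (hM : HasEntrywiseDerivAt (fun s => J * Ω s + Ω s * J)
      ((J * Ω t + Ω t * J) * Ω t - Ω t * (J * Ω t + Ω t * J) + (P t * J - J * P t)) t)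
    (hP : HasEntrywiseDerivAt P (P t * Ω t - Ω t * P t) t) :
    HasDerivAt (fun s => -(1 / 4 : ℝ) * ((J * Ω s + Ω s * J) * Ω s).trace
      - (1 / 2 : ℝ) * (J * P s).trace) 0 t := by
  set M := J * Ω t + Ω t * J
  have hM' : HasEntrywiseDerivAt (fun s => J * Ω s + Ω s * J) (J * W + W * J) t := by
    have hJ := hasEntrywiseDerivAt_const J t
    simpa using (hJ.mul hΩ).add (hΩ.mul hJ)
  have hW : J * W + W * J = M * Ω t - Ω t * M + (P t * J - J * P t) := hM'.unique hM
  have hMΩ : HasDerivAt (fun s => ((J * Ω s + Ω s * J) * Ω s).trace)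
      (2 * ((P t * J - J * P t) * Ω t).trace) t := by
    refine (hM.mul hΩ).trace.congr_deriv ?_
    rw [trace_add, trace_anticommutator_mul_comm, hW, add_mul, trace_add,
      trace_commutator_mul_self]
    ring
  have hJP : HasDerivAt (fun s => (J * P s).trace) (-((P t * J - J * P t) * Ω t).trace) t := by
    refine ((hasEntrywiseDerivAt_const J t).mul hP).trace.congr_deriv ?_
    rw [zero_mul, zero_add, trace_mul_commutator]
  exact ((hMΩ.const_mul (-(1 / 4 : ℝ))).fun_sub (hJP.const_mul (1 / 2 : ℝ))).congr_deriv
    (by ring)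

theorem stmt_4_general (n : ℕ) (J : Matrix (Fin n) (Fin n) ℝ)
    (Ω P : ℝ → Matrix (Fin n) (Fin n) ℝ)
    (hΩ : ∀ i j, Differentiable ℝ fun t => Ω t i j)
    (hM : ∀ t, ∀ i j, HasDerivAt (fun s => (J * Ω s + Ω s * J) i j)
      (((J * Ω t + Ω t * J) * Ω t - Ω t * (J * Ω t + Ω t * J)
        + (P t * J - J * P t)) i j) t)
    (hP : ∀ t, ∀ i j, HasDerivAt (fun s => P s i j)
      ((P t * Ω t - Ω t * P t) i j) t) :
    ∀ t₀ t₁ : ℝ,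
      -(1 / 4 : ℝ) * ((J * Ω t₀ + Ω t₀ * J) * Ω t₀).trace - (1 / 2 : ℝ) * (J * P t₀).trace
      = -(1 / 4 : ℝ) * ((J * Ω t₁ + Ω t₁ * J) * Ω t₁).trace
        - (1 / 2 : ℝ) * (J * P t₁).trace := by
  have hH : ∀ t, HasDerivAt (fun s => -(1 / 4 : ℝ) * ((J * Ω s + Ω s * J) * Ω s).trace
      - (1 / 2 : ℝ) * (J * P s).trace) 0 t := fun t =>
    hasDerivAt_rigidBody_energy (hasEntrywiseDerivAt_deriv fun i j => (hΩ i j).differentiableAt)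
      (hM t) (hP t)
  exact is_const_of_deriv_eq_zero (fun t => (hH t).differentiableAt) (fun t => (hH t).deriv)

/-- For the rigid body in a quadratic potential, with `M := JΩ + ΩJ`,
`Ṁ = [M,Ω] + [P,J]` and `Ṗ = [P,Ω]`, the energy
`H(t) = −(1/4)·tr(M(t)Ω(t)) − (1/2)·tr(J P(t))` is constant in `t`. -/
theorem stmt_4 (n : ℕ) (J : Matrix (Fin n) (Fin n) ℝ) (hJ : Jᵀ = J)
    (Ω P : ℝ → Matrix (Fin n) (Fin n) ℝ)
    (hΩ : ∀ i j, Differentiable ℝ fun t => Ω t i j)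
    (hP' : ∀ i j, Differentiable ℝ fun t => P t i j)
    (hM : ∀ t, ∀ i j, HasDerivAt (fun s => (J * Ω s + Ω s * J) i j)
      (((J * Ω t + Ω t * J) * Ω t - Ω t * (J * Ω t + Ω t * J)
        + (P t * J - J * P t)) i j) t)
    (hP : ∀ t, ∀ i j, HasDerivAt (fun s => P s i j)
      ((P t * Ω t - Ω t * P t) i j) t) :
    ∀ t₀ t₁ : ℝ,
      -(1 / 4 : ℝ) * ((J * Ω t₀ + Ω t₀ * J) * Ω t₀).trace - (1 / 2 : ℝ) * (J * P t₀).trace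
      = -(1 / 4 : ℝ) * ((J * Ω t₁ + Ω t₁ * J) * Ω t₁).trace
        - (1 / 2 : ℝ) * (J * P t₁).trace :=
  stmt_4_general n J Ω P hΩ hM hP
end

section
/- Let ε ≠ 0 be real, J a real symmetric n×n matrix, W a real orthogonal n×n matrix, and P a real symmetric n×n matrix. Define M := (1/ε)(WJ − JWᵀ) − (ε/2)(PWJ − JWᵀP), M₊ := (1/ε)(JW − WᵀJ) − (ε/2)(JPW − WᵀPJ), and P₊ := WᵀPW. Then the discrete Euler–Poincaré equation W M₊ Wᵀ = M + (ε/2)·[P, WJ + JWᵀ] holds, where [X,Y] = XY − YX. (Hence the discrete Euler–Poincaré equations for the discrete rigid body in a quadratic potential are equivalent to this explicit three-equation system.) -/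
open Matrix

/-- For the discrete rigid body in a quadratic potential, with
`M := (1/ε)(WJ − JWᵀ) − (ε/2)(PWJ − JWᵀP)`,
`M₊ := (1/ε)(JW − WᵀJ) − (ε/2)(JPW − WᵀPJ)` and `P₊ := WᵀPW`,
the discrete Euler–Poincaré equation `W M₊ Wᵀ = M + (ε/2)[P, WJ + JWᵀ]` holds. -/
theorem stmt_11 (n : ℕ) (ε : ℝ) (hε : ε ≠ 0)
    (J : Matrix (Fin n) (Fin n) ℝ) (hJ : Jᵀ = J)
    (W : Matrix (Fin n) (Fin n) ℝ) (horth : Wᵀ * W = 1 ∧ W * Wᵀ = 1)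
    (P : Matrix (Fin n) (Fin n) ℝ) (hP : Pᵀ = P)
    (M Mp Pp : Matrix (Fin n) (Fin n) ℝ)
    (hM : M = (1 / ε) • (W * J - J * Wᵀ) - (ε / 2) • (P * W * J - J * Wᵀ * P))
    (hMp : Mp = (1 / ε) • (J * W - Wᵀ * J) - (ε / 2) • (J * P * W - Wᵀ * P * J))
    (hPp : Pp = Wᵀ * P * W) :
    W * Mp * Wᵀ = M + (ε / 2) • (P * (W * J + J * Wᵀ) - (W * J + J * Wᵀ) * P) := by
  obtain ⟨h1, h2⟩ := horth
  subst hM hMp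
  have hcan : ∀ A : Matrix (Fin n) (Fin n) ℝ, W * (Wᵀ * A) = A := fun A => by
    rw [← mul_assoc, h2, one_mul]
  have e1 : W * ((1 / ε) • (J * W - Wᵀ * J)) * Wᵀ = (1 / ε) • (W * J - J * Wᵀ) := by
    rw [Matrix.mul_smul, Matrix.smul_mul]
    congr 1
    simp only [mul_sub, sub_mul, mul_assoc, h2, mul_one, hcan]
  have e2 : W * ((ε / 2) • (J * P * W - Wᵀ * P * J)) * Wᵀ =
      (ε / 2) • (W * (J * P) - P * (J * Wᵀ)) := by
    rw [Matrix.mul_smul, Matrix.smul_mul]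
    congr 1
    simp only [mul_sub, sub_mul, mul_assoc, h2, mul_one, hcan]
  rw [mul_sub, sub_mul, e1, e2, mul_add, add_mul]
  simp only [← mul_assoc]
  module
end

section
/- Let ε ≠ 0 be real, J a real symmetric n×n matrix, W a real orthogonal n×n matrix, P a real symmetric n×n matrix, and M a real n×n matrix. Define U(λ) := (I − (ε²/2)P)W + ελJ and L(λ) := (I − (ε²/2)P)² − ε²λM − ε²λ²J². Then the equation M = (1/ε)(WJ − JWᵀ) − (ε/2)(PWJ − JWᵀP) holds if and only if L(λ) = U(λ)·U(−λ)ᵀ for every λ ∈ ℝ. -/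
open Matrix

/-- With `U(λ) := (I − (ε²/2)P)W + ελJ` and
`L(λ) := (I − (ε²/2)P)² − ε²λM − ε²λ²J²`, the equation
`M = (1/ε)(WJ − JWᵀ) − (ε/2)(PWJ − JWᵀP)` holds if and only if
`L(λ) = U(λ)·U(−λ)ᵀ` for every `λ ∈ ℝ`. -/
theorem stmt_12 (n : ℕ) (ε : ℝ) (hε : ε ≠ 0)
    (J : Matrix (Fin n) (Fin n) ℝ) (hJ : Jᵀ = J)
    (W : Matrix (Fin n) (Fin n) ℝ) (horth : Wᵀ * W = 1 ∧ W * Wᵀ = 1)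
    (P : Matrix (Fin n) (Fin n) ℝ) (hP : Pᵀ = P)
    (M : Matrix (Fin n) (Fin n) ℝ)
    (U L : ℝ → Matrix (Fin n) (Fin n) ℝ)
    (hU : ∀ lam, U lam = (1 - (ε ^ 2 / 2) • P) * W + (ε * lam) • J)
    (hL : ∀ lam, L lam = (1 - (ε ^ 2 / 2) • P) ^ 2 - (ε ^ 2 * lam) • M
      - (ε ^ 2 * lam ^ 2) • J ^ 2) :
    (M = (1 / ε) • (W * J - J * Wᵀ) - (ε / 2) • (P * W * J - J * Wᵀ * P))
      ↔ (∀ lam : ℝ, L lam = U lam * (U (-lam))ᵀ) := by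
  set A : Matrix (Fin n) (Fin n) ℝ := 1 - (ε ^ 2 / 2) • P with hA
  have hAT : Aᵀ = A := by
    rw [hA, transpose_sub, transpose_smul, transpose_one, hP]
  have key : ∀ l : ℝ, U l * (U (-l))ᵀ
      = A * A - (ε * l) • (A * W * J - J * Wᵀ * A) - (ε ^ 2 * l ^ 2) • (J * J) := by
    intro l
    rw [hU, hU, transpose_add, transpose_smul, hJ, transpose_mul, hAT,
      add_mul, mul_add, mul_add]
    have h1 : A * W * (Wᵀ * A) = A * A := by
      rw [← mul_assoc, mul_assoc A W Wᵀ, horth.2, mul_one]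
    rw [h1]
    simp only [mul_smul_comm, smul_mul_assoc, smul_smul, ← mul_assoc]
    match_scalars <;> ring
  have hAid : A * W * J - J * Wᵀ * A
      = (W * J - J * Wᵀ) - (ε ^ 2 / 2) • (P * W * J - J * Wᵀ * P) := by
    rw [hA, sub_mul, sub_mul, one_mul, smul_mul_assoc, smul_mul_assoc,
      mul_sub, mul_one, mul_smul_comm]
    match_scalars <;> ring
  constructor
  · intro hM lam
    rw [hL, key, pow_two, pow_two J]
    congr 1
    congr 1
    rw [hM, hAid]
    match_scalars <;> field_simp <;> ring
  · intro h
    have h1 := h 1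
    rw [hL, key, pow_two, pow_two J] at h1
    have h3 : (ε ^ 2 * 1) • M = (ε * 1) • (A * W * J - J * Wᵀ * A) :=
      sub_right_inj.mp (sub_left_inj.mp h1)
    have h4 : M = (ε ^ 2)⁻¹ • ((ε * 1) • (A * W * J - J * Wᵀ * A)) := by
      rw [← h3, smul_smul, mul_one, inv_mul_cancel₀ (pow_ne_zero 2 hε), one_smul]
    rw [h4, hAid]
    match_scalars <;> field_simp <;> ring
end

section
/- Let ε ≠ 0 be real, J a real symmetric n×n matrix, W a real orthogonal n×n matrix, P a real symmetric n×n matrix, M₊ a real n×n matrix, and set P₊ := WᵀPW. Define U(λ) := (I − (ε²/2)P)W + ελJ and L₊(λ) := (I − (ε²/2)P₊)² − ε²λM₊ − ε²λ²J². Then the equation M₊ = (1/ε)(JW − WᵀJ) − (ε/2)(JPW − WᵀPJ) holds if and only if L₊(λ) = U(−λ)ᵀ·U(λ) for every λ ∈ ℝ. -/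
open Matrix

/-- With `P₊ := WᵀPW`, `U(λ) := (I − (ε²/2)P)W + ελJ` and
`L₊(λ) := (I − (ε²/2)P₊)² − ε²λM₊ − ε²λ²J²`, the equation
`M₊ = (1/ε)(JW − WᵀJ) − (ε/2)(JPW − WᵀPJ)` holds if and only if
`L₊(λ) = U(−λ)ᵀ·U(λ)` for every `λ ∈ ℝ`. -/
theorem stmt_13 (n : ℕ) (ε : ℝ) (hε : ε ≠ 0)
    (J : Matrix (Fin n) (Fin n) ℝ) (hJ : Jᵀ = J)
    (W : Matrix (Fin n) (Fin n) ℝ) (horth : Wᵀ * W = 1 ∧ W * Wᵀ = 1)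
    (P : Matrix (Fin n) (Fin n) ℝ) (hP : Pᵀ = P)
    (Mp Pp : Matrix (Fin n) (Fin n) ℝ) (hPp : Pp = Wᵀ * P * W)
    (U Lp : ℝ → Matrix (Fin n) (Fin n) ℝ)
    (hU : ∀ lam, U lam = (1 - (ε ^ 2 / 2) • P) * W + (ε * lam) • J)
    (hLp : ∀ lam, Lp lam = (1 - (ε ^ 2 / 2) • Pp) ^ 2 - (ε ^ 2 * lam) • Mp
      - (ε ^ 2 * lam ^ 2) • J ^ 2) :
    (Mp = (1 / ε) • (J * W - Wᵀ * J) - (ε / 2) • (J * P * W - Wᵀ * P * J))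
      ↔ (∀ lam : ℝ, Lp lam = (U (-lam))ᵀ * U lam) := by
  obtain ⟨h1, h2⟩ := horth
  have hWW : ∀ X : Matrix (Fin n) (Fin n) ℝ, W * (Wᵀ * X) = X := fun X => by
    rw [← Matrix.mul_assoc, h2, Matrix.one_mul]
  have hTW : ∀ X : Matrix (Fin n) (Fin n) ℝ, Wᵀ * (W * X) = X := fun X => by
    rw [← Matrix.mul_assoc, h1, Matrix.one_mul]
  set D := ε • Mp - ((J * W - Wᵀ * J) - (ε ^ 2 / 2) • (J * P * W - Wᵀ * P * J)) with hD
  have key : ∀ lam : ℝ, (U (-lam))ᵀ * U lam = Lp lam + (ε * lam) • D := by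
    intro lam
    rw [hU, hU, hLp, hPp, hD]
    simp only [Matrix.transpose_add, Matrix.transpose_sub, Matrix.transpose_mul,
      Matrix.transpose_smul, Matrix.transpose_one, hJ, hP, pow_two,
      Matrix.mul_add, Matrix.add_mul, Matrix.mul_sub, Matrix.sub_mul,
      Matrix.smul_mul, Matrix.mul_smul, smul_smul, smul_sub, smul_add,
      Matrix.mul_one, Matrix.one_mul, Matrix.mul_assoc, hWW, hTW, h1, h2]
    module
  constructor
  · intro hM lam
    have hD0 : D = 0 := by
      rw [hD, hM]
      rw [smul_sub, smul_smul, smul_smul, mul_one_div_cancel hε, one_smul]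
      ring_nf
      abel
    rw [key, hD0, smul_zero, add_zero]
  · intro h
    have h1' := (key 1).symm.trans (h 1).symm
    have hD0 : D = 0 := by
      have : (ε * 1) • D = 0 := by
        have := add_eq_left.mp h1'
        exact this
      rcases smul_eq_zero.mp this with hc | hd
      · exact absurd hc (by simpa using hε)
      · exact hd
    have hMp : ε • Mp = (J * W - Wᵀ * J) - (ε ^ 2 / 2) • (J * P * W - Wᵀ * P * J) := by
      have := sub_eq_zero.mp hD0
      exact this
    have : Mp = ε⁻¹ • (ε • Mp) := (inv_smul_smul₀ hε Mp).symm
    rw [this, hMp, smul_sub, smul_smul]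
    congr 1
    · rw [one_div]
    · congr 1
      field_simp
end

section
/- Let ε ≠ 0 be real, J a real symmetric n×n matrix, W a real orthogonal n×n matrix, and P a real symmetric n×n matrix. Define M := (1/ε)(WJ − JWᵀ) − (ε/2)(PWJ − JWᵀP), M₊ := (1/ε)(JW − WᵀJ) − (ε/2)(JPW − WᵀPJ), and P₊ := WᵀPW. Then for every λ ∈ ℝ, charpoly((I − (ε²/2)P₊)² − ε²λM₊ − ε²λ²J²) = charpoly((I − (ε²/2)P)² − ε²λM − ε²λ²J²); i.e., the Lax matrix Lₖ(λ) remains isospectral under the discrete time evolution. -/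
open Matrix Polynomial

lemma aux_charpoly_mul_comm {n : ℕ} (A B : Matrix (Fin n) (Fin n) ℝ) :
    (A * B).charpoly = (B * A).charpoly := by
  classical
  set S : Matrix (Fin n) (Fin n) ℝ[X] := Matrix.scalar (Fin n) (X : ℝ[X]) with hS
  set A' : Matrix (Fin n) (Fin n) ℝ[X] := (C : ℝ →+* ℝ[X]).mapMatrix A with hA'
  set B' : Matrix (Fin n) (Fin n) ℝ[X] := (C : ℝ →+* ℝ[X]).mapMatrix B with hB'
  have hcomm : ∀ M : Matrix (Fin n) (Fin n) ℝ[X], S * M = M * S := fun M =>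
    (Matrix.scalar_commute (X : ℝ[X]) (fun r => Commute.all _ _) M)
  have hdetS : S.det = (X : ℝ[X]) ^ n := by
    simp [hS, Matrix.scalar, Matrix.det_diagonal]
  -- det of the two big block matrices
  have h1 : (Matrix.fromBlocks S A' B' 1).det = (S - A' * B').det := by
    have key : Matrix.fromBlocks (1 : Matrix (Fin n) (Fin n) ℝ[X]) (-A') 0 1
        * Matrix.fromBlocks S A' B' 1 = Matrix.fromBlocks (S - A' * B') 0 B' 1 := by
      rw [Matrix.fromBlocks_multiply]
      congr 1 <;> simp [sub_eq_add_neg]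
    have := congrArg Matrix.det key
    rw [Matrix.det_mul, Matrix.det_fromBlocks_zero₂₁, Matrix.det_fromBlocks_zero₁₂] at this
    simpa using this
  have h2 : (Matrix.fromBlocks 1 A' B' S).det = (S - B' * A').det := by
    have key : Matrix.fromBlocks (1 : Matrix (Fin n) (Fin n) ℝ[X]) 0 (-B') 1
        * Matrix.fromBlocks 1 A' B' S = Matrix.fromBlocks 1 A' 0 (S - B' * A') := by
      rw [Matrix.fromBlocks_multiply]
      congr 1 <;> simp [sub_eq_add_neg, add_comm]
    have := congrArg Matrix.det key
    rw [Matrix.det_mul, Matrix.det_fromBlocks_zero₁₂, Matrix.det_fromBlocks_zero₂₁] at this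
    simpa using this
  -- linking identity
  have link : Matrix.fromBlocks S A' B' 1 * Matrix.fromBlocks 1 0 0 S
      = Matrix.fromBlocks S 0 0 1 * Matrix.fromBlocks 1 A' B' S := by
    rw [Matrix.fromBlocks_multiply, Matrix.fromBlocks_multiply]
    congr 1 <;> simp [hcomm]
  have hdet := congrArg Matrix.det link
  rw [Matrix.det_mul, Matrix.det_mul, Matrix.det_fromBlocks_zero₂₁,
    Matrix.det_fromBlocks_zero₂₁, h1, h2, hdetS] at hdet
  simp only [Matrix.det_one, one_mul, mul_one] at hdet
  have hX : (X : ℝ[X]) ^ n ≠ 0 := pow_ne_zero _ Polynomial.X_ne_zero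
  have hfin : (S - A' * B').det = (S - B' * A').det := mul_right_cancel₀ hX (by
    rw [hdet]; ring)
  -- identify with charpolys
  have e1 : Matrix.charmatrix (A * B) = S - A' * B' := by
    rw [Matrix.charmatrix, _root_.map_mul]
  have e2 : Matrix.charmatrix (B * A) = S - B' * A' := by
    rw [Matrix.charmatrix, _root_.map_mul]
  rw [Matrix.charpoly, Matrix.charpoly, e1, e2, hfin]

open Matrix

/-- The Lax matrix `L(λ) = (I − (ε²/2)P)² − ε²λM − ε²λ²J²` of the discrete rigid body
in a quadratic potential remains isospectral under the discrete time evolution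
`M ↦ M₊, P ↦ P₊ = WᵀPW`. -/
theorem stmt_14 (n : ℕ) (ε : ℝ) (hε : ε ≠ 0)
    (J : Matrix (Fin n) (Fin n) ℝ) (hJ : Jᵀ = J)
    (W : Matrix (Fin n) (Fin n) ℝ) (horth : Wᵀ * W = 1 ∧ W * Wᵀ = 1)
    (P : Matrix (Fin n) (Fin n) ℝ) (hP : Pᵀ = P)
    (M Mp Pp : Matrix (Fin n) (Fin n) ℝ)
    (hM : M = (1 / ε) • (W * J - J * Wᵀ) - (ε / 2) • (P * W * J - J * Wᵀ * P))
    (hMp : Mp = (1 / ε) • (J * W - Wᵀ * J) - (ε / 2) • (J * P * W - Wᵀ * P * J))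
    (hPp : Pp = Wᵀ * P * W) :
    ∀ lam : ℝ,
      ((1 - (ε ^ 2 / 2) • Pp) ^ 2 - (ε ^ 2 * lam) • Mp
        - (ε ^ 2 * lam ^ 2) • J ^ 2).charpoly
      = ((1 - (ε ^ 2 / 2) • P) ^ 2 - (ε ^ 2 * lam) • M
        - (ε ^ 2 * lam ^ 2) • J ^ 2).charpoly := by
  intro lam
  have hW1 : ∀ X : Matrix (Fin n) (Fin n) ℝ, Wᵀ * (W * X) = X := by
    intro X; rw [← mul_assoc, horth.1, one_mul]
  have hW2 : ∀ X : Matrix (Fin n) (Fin n) ℝ, W * (Wᵀ * X) = X := by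
    intro X; rw [← mul_assoc, horth.2, one_mul]
  set A : Matrix (Fin n) (Fin n) ℝ :=
    (1 - (ε ^ 2 / 2) • P) * W + (ε * lam) • J with hA
  set B : Matrix (Fin n) (Fin n) ℝ :=
    Wᵀ * (1 - (ε ^ 2 / 2) • P) - (ε * lam) • J with hB
  have hAB : (1 - (ε ^ 2 / 2) • P) ^ 2 - (ε ^ 2 * lam) • M
      - (ε ^ 2 * lam ^ 2) • J ^ 2 = A * B := by
    subst hM
    rw [hA, hB]
    simp only [pow_two, mul_sub, sub_mul, mul_add, add_mul, smul_mul_assoc, mul_smul_comm,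
      smul_smul, smul_sub, smul_add, sub_smul, one_mul, mul_one, mul_assoc, hW1, hW2,
      horth.1, horth.2]
    match_scalars
    all_goals field_simp
    all_goals (first | exact Or.inl (by ring) | ring1 | trivial)
  have hBA : (1 - (ε ^ 2 / 2) • Pp) ^ 2 - (ε ^ 2 * lam) • Mp
      - (ε ^ 2 * lam ^ 2) • J ^ 2 = B * A := by
    subst hMp hPp
    rw [hA, hB]
    simp only [pow_two, mul_sub, sub_mul, mul_add, add_mul, smul_mul_assoc, mul_smul_comm,
      smul_smul, smul_sub, smul_add, sub_smul, one_mul, mul_one, mul_assoc, hW1, hW2,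
      horth.1, horth.2]
    match_scalars
    all_goals field_simp
    all_goals (first | exact Or.inl (by ring) | ring1 | trivial)
  rw [hAB, hBA, aux_charpoly_mul_comm]
end

section
/- Let ε ≠ 0 be real, J a real symmetric n×n matrix, W a real orthogonal n×n matrix, and P a real symmetric n×n matrix. Define M := (1/ε)(WJ − JWᵀ) − (ε/2)(PWJ − JWᵀP), M₊ := (1/ε)(JW − WᵀJ) − (ε/2)(JPW − WᵀPJ), and P₊ := WᵀPW. Then for every λ ∈ ℝ, charpoly(P₊ − (ε²/4)P₊² + λM₊ + λ²J²) = charpoly(P − (ε²/4)P² + λM + λ²J²); i.e., the integrals of motion of the discrete time map are obtained from those of the continuous time rigid body in a quadratic potential by replacing P with P − (ε²/4)P². -/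
/-!
With `Q = ε⁻¹ − (ε/2) P` one has `Q² = ε⁻² − (P − (ε²/4) P²)`, and the matrices
`A = Q W + λ J`, `B = -Wᵀ Q + λ J` factor the two Lax matrices as
`P − (ε²/4) P² + λ M + λ² J² = A B + ε⁻²` and `P₊ − (ε²/4) P₊² + λ M₊ + λ² J² = B A + ε⁻²`.
Since `A B` and `B A` have the same characteristic polynomial, so do the two Lax matrices.
-/

open Polynomial

theorem four_ne_zero_of_two {R : Type*} [Ring R] [NoZeroDivisors R] [NeZero (2 : R)] :
    (4 : R) ≠ 0 := by
  rw [show (4 : R) = 2 * 2 by norm_num]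
  exact mul_ne_zero two_ne_zero two_ne_zero

namespace Matrix

variable {n K : Type*} [Fintype n] [DecidableEq n]

theorem charpoly_add_smul_one {R : Type*} [CommRing R] (M : Matrix n n R) (c : R) :
    (M + c • 1).charpoly = M.charpoly.comp (X - C c) := by
  simpa [sub_eq_add_neg, smul_one_eq_diagonal] using charpoly_sub_scalar M (-c)

theorem charpoly_mul_add_smul_one_comm {R : Type*} [CommRing R] (A B : Matrix n n R) (c : R) :
    (A * B + c • 1).charpoly = (B * A + c • 1).charpoly := by
  rw [charpoly_add_smul_one, charpoly_add_smul_one, charpoly_mul_comm]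

variable [Field K]

def discreteLax (ε lam : K) (J P M : Matrix n n K) : Matrix n n K :=
  P - (ε ^ 2 / 4) • P ^ 2 + lam • M + lam ^ 2 • J ^ 2

variable [NeZero (2 : K)] {ε : K} (lam : K) {J W P : Matrix n n K}

theorem discreteLax_eq_mul_add_smul_one (hε : ε ≠ 0) (horth₂ : W * Wᵀ = 1) :
    discreteLax ε lam J P ((1 / ε) • (W * J - J * Wᵀ) - (ε / 2) • (P * W * J - J * Wᵀ * P))
      = (((1 / ε) • 1 - (ε / 2) • P) * W + lam • J) * (-(Wᵀ * ((1 / ε) • 1 - (ε / 2) • P)) + lam • J)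
        + (1 / ε ^ 2) • 1 := by
  have h4 : (4 : K) ≠ 0 := four_ne_zero_of_two
  have horth₂' (X : Matrix n n K) : W * (Wᵀ * X) = X := by
    rw [← Matrix.mul_assoc, horth₂, Matrix.one_mul]
  simp only [discreteLax, Matrix.add_mul, Matrix.sub_mul, Matrix.mul_add, Matrix.mul_sub,
    Matrix.mul_neg, Matrix.smul_mul, Matrix.mul_smul, Matrix.mul_assoc, Matrix.one_mul,
    Matrix.mul_one, pow_two, horth₂, horth₂']
  match_scalars <;> field_simp <;> ring

theorem discreteLax_conj_eq_mul_add_smul_one (hε : ε ≠ 0) (horth₁ : Wᵀ * W = 1)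
    (horth₂ : W * Wᵀ = 1) :
    discreteLax ε lam J (Wᵀ * P * W)
        ((1 / ε) • (J * W - Wᵀ * J) - (ε / 2) • (J * P * W - Wᵀ * P * J))
      = (-(Wᵀ * ((1 / ε) • 1 - (ε / 2) • P)) + lam • J) * (((1 / ε) • 1 - (ε / 2) • P) * W + lam • J)
        + (1 / ε ^ 2) • 1 := by
  have h4 : (4 : K) ≠ 0 := four_ne_zero_of_two
  have horth₂' (X : Matrix n n K) : W * (Wᵀ * X) = X := by
    rw [← Matrix.mul_assoc, horth₂, Matrix.one_mul]
  simp only [discreteLax, Matrix.add_mul, Matrix.sub_mul, Matrix.mul_add, Matrix.mul_sub,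
    Matrix.neg_mul, Matrix.smul_mul, Matrix.mul_smul, Matrix.mul_assoc,
    Matrix.one_mul, Matrix.mul_one, pow_two, horth₁, horth₂']
  match_scalars <;> field_simp <;> ring

end Matrix

open Matrix

theorem stmt_15_general (n : ℕ) (ε : ℝ) (hε : ε ≠ 0)
    (J : Matrix (Fin n) (Fin n) ℝ)
    (W : Matrix (Fin n) (Fin n) ℝ) (horth : Wᵀ * W = 1 ∧ W * Wᵀ = 1)
    (P : Matrix (Fin n) (Fin n) ℝ)
    (M Mp Pp : Matrix (Fin n) (Fin n) ℝ)
    (hM : M = (1 / ε) • (W * J - J * Wᵀ) - (ε / 2) • (P * W * J - J * Wᵀ * P))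
    (hMp : Mp = (1 / ε) • (J * W - Wᵀ * J) - (ε / 2) • (J * P * W - Wᵀ * P * J))
    (hPp : Pp = Wᵀ * P * W) :
    ∀ lam : ℝ,
      (Pp - (ε ^ 2 / 4) • Pp ^ 2 + lam • Mp + (lam ^ 2) • J ^ 2).charpoly
      = (P - (ε ^ 2 / 4) • P ^ 2 + lam • M + (lam ^ 2) • J ^ 2).charpoly := by
  intro lam
  subst hM hMp hPp
  change (discreteLax ε lam J (Wᵀ * P * W) _).charpoly = (discreteLax ε lam J P _).charpoly
  rw [discreteLax_eq_mul_add_smul_one lam hε horth.2,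
    discreteLax_conj_eq_mul_add_smul_one lam hε horth.1 horth.2, charpoly_mul_add_smul_one_comm]

/-- The integrals of motion of the discrete time map are obtained from those of the
continuous time rigid body in a quadratic potential by replacing `P` with
`P − (ε²/4)P²`: the characteristic polynomial of `P − (ε²/4)P² + λM + λ²J²` is
preserved under the discrete time evolution. -/
theorem stmt_15 (n : ℕ) (ε : ℝ) (hε : ε ≠ 0)
    (J : Matrix (Fin n) (Fin n) ℝ) (hJ : Jᵀ = J)
    (W : Matrix (Fin n) (Fin n) ℝ) (horth : Wᵀ * W = 1 ∧ W * Wᵀ = 1)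
    (P : Matrix (Fin n) (Fin n) ℝ) (hP : Pᵀ = P)
    (M Mp Pp : Matrix (Fin n) (Fin n) ℝ)
    (hM : M = (1 / ε) • (W * J - J * Wᵀ) - (ε / 2) • (P * W * J - J * Wᵀ * P))
    (hMp : Mp = (1 / ε) • (J * W - Wᵀ * J) - (ε / 2) • (J * P * W - Wᵀ * P * J))
    (hPp : Pp = Wᵀ * P * W) :
    ∀ lam : ℝ,
      (Pp - (ε ^ 2 / 4) • Pp ^ 2 + lam • Mp + (lam ^ 2) • J ^ 2).charpoly
      = (P - (ε ^ 2 / 4) • P ^ 2 + lam • M + (lam ^ 2) • J ^ 2).charpoly :=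
  stmt_15_general n ε hε J W horth P M Mp Pp hM hMp hPp
end

section
/- Let J be a real symmetric n×n matrix, and let Ω, M : ℝ → Matₙ(ℝ) and p : ℝ → ℝⁿ be differentiable with Ω(t) skew-symmetric for all t, M = JΩ + ΩJ, Ṁ = [M,Ω] + p(Jp)ᵀ − (Jp)pᵀ, and ṗ = −Ωp (the Clebsch system). Then the symmetric matrix P(t) := p(t)p(t)ᵀ satisfies Ṗ = [P,Ω] and [P,J] = p(Jp)ᵀ − (Jp)pᵀ, so that (M, P) solves the equations Ṁ = [M,Ω] + [P,J], Ṗ = [P,Ω] of a rigid body in a quadratic potential. -/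
/-!
Everything reduces to two identities for rank-one matrices: `(x yᵀ) A - A (x yᵀ) = x (Aᵀ y)ᵀ - (A x) yᵀ`,
and the Leibniz rule `d(p pᵀ) = ṗ pᵀ + p ṗᵀ`. For symmetric `J` the first gives `[P,J]`; for skew `Ω`
it turns `[P,Ω]` into `-(Ωp)pᵀ - p(Ωp)ᵀ`, which is the Leibniz derivative when `ṗ = -Ωp`.
-/

open Matrix

namespace Matrix

variable {n α : Type*} [Fintype n] [CommRing α]

theorem vecMulVec_mul_sub_mul_vecMulVec (x y : n → α) (A : Matrix n n α) :
    vecMulVec x y * A - A * vecMulVec x y = vecMulVec x (Aᵀ *ᵥ y) - vecMulVec (A *ᵥ x) y := by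
  rw [vecMulVec_mul, mul_vecMulVec, mulVec_transpose]

theorem vecMulVec_self_mul_sub_mul_vecMulVec_self_of_transpose_eq_neg (x : n → α)
    {A : Matrix n n α} (hA : Aᵀ = -A) :
    vecMulVec x x * A - A * vecMulVec x x = vecMulVec (-(A *ᵥ x)) x + vecMulVec x (-(A *ᵥ x)) := by
  rw [vecMulVec_mul_sub_mul_vecMulVec, hA, neg_mulVec, neg_vecMulVec, sub_eq_add_neg, add_comm]

end Matrix

theorem HasDerivAt.vecMulVec_apply {ι 𝕜 : Type*} [NontriviallyNormedField 𝕜]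
    {x y : 𝕜 → ι → 𝕜} {x' y' : ι → 𝕜} {t : 𝕜}
    (hx : ∀ i, HasDerivAt (fun s => x s i) (x' i) t)
    (hy : ∀ j, HasDerivAt (fun s => y s j) (y' j) t) (i j : ι) :
    HasDerivAt (fun s => vecMulVec (x s) (y s) i j)
      ((vecMulVec x' (y t) + vecMulVec (x t) y') i j) t := by
  exact (hx i).mul (hy j)

theorem stmt_16_general (n : ℕ) (J : Matrix (Fin n) (Fin n) ℝ) (hJ : Jᵀ = J)
    (Ω M : ℝ → Matrix (Fin n) (Fin n) ℝ) (p : ℝ → Fin n → ℝ)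
    (hΩskew : ∀ t, (Ω t)ᵀ = -Ω t)
    (hM : ∀ t, ∀ i j, HasDerivAt (fun s => M s i j)
      ((M t * Ω t - Ω t * M t
        + (vecMulVec (p t) ((J : Matrix (Fin n) (Fin n) ℝ).mulVec (p t))
          - vecMulVec (J.mulVec (p t)) (p t))) i j) t)
    (hp : ∀ t, ∀ i, HasDerivAt (fun s => p s i) (-(Ω t).mulVec (p t) i) t) :
    ∀ t,
      (∀ i j, HasDerivAt (fun s => vecMulVec (p s) (p s) i j)
        ((vecMulVec (p t) (p t) * Ω t - Ω t * vecMulVec (p t) (p t)) i j) t) ∧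
      (vecMulVec (p t) (p t) * J - J * vecMulVec (p t) (p t)
        = vecMulVec (p t) (J.mulVec (p t)) - vecMulVec (J.mulVec (p t)) (p t)) ∧
      (∀ i j, HasDerivAt (fun s => M s i j)
        ((M t * Ω t - Ω t * M t
          + (vecMulVec (p t) (p t) * J - J * vecMulVec (p t) (p t))) i j) t) := by
  intro t
  have hPJ : vecMulVec (p t) (p t) * J - J * vecMulVec (p t) (p t)
      = vecMulVec (p t) (J *ᵥ p t) - vecMulVec (J *ᵥ p t) (p t) := by
    rw [vecMulVec_mul_sub_mul_vecMulVec, hJ]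
  refine ⟨fun i j => ?_, hPJ, fun i j => hPJ ▸ hM t i j⟩
  rw [vecMulVec_self_mul_sub_mul_vecMulVec_self_of_transpose_eq_neg _ (hΩskew t)]
  exact HasDerivAt.vecMulVec_apply (hp t) (hp t) i j

/-- For the Clebsch system (`M = JΩ + ΩJ`, `Ṁ = [M,Ω] + p(Jp)ᵀ − (Jp)pᵀ`, `ṗ = −Ωp`,
`Ω` skew, `J` symmetric), the rank-one symmetric matrix `P := ppᵀ` satisfies
`Ṗ = [P,Ω]` and `[P,J] = p(Jp)ᵀ − (Jp)pᵀ`, so that `(M,P)` solves the equations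
`Ṁ = [M,Ω] + [P,J]`, `Ṗ = [P,Ω]` of a rigid body in a quadratic potential. -/
theorem stmt_16 (n : ℕ) (J : Matrix (Fin n) (Fin n) ℝ) (hJ : Jᵀ = J)
    (Ω M : ℝ → Matrix (Fin n) (Fin n) ℝ) (p : ℝ → Fin n → ℝ)
    (hΩdiff : ∀ i j, Differentiable ℝ fun t => Ω t i j)
    (hΩskew : ∀ t, (Ω t)ᵀ = -Ω t)
    (hMdef : ∀ t, M t = J * Ω t + Ω t * J)
    (hM : ∀ t, ∀ i j, HasDerivAt (fun s => M s i j)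
      ((M t * Ω t - Ω t * M t
        + (vecMulVec (p t) ((J : Matrix (Fin n) (Fin n) ℝ).mulVec (p t))
          - vecMulVec (J.mulVec (p t)) (p t))) i j) t)
    (hp : ∀ t, ∀ i, HasDerivAt (fun s => p s i) (-(Ω t).mulVec (p t) i) t) :
    ∀ t,
      (∀ i j, HasDerivAt (fun s => vecMulVec (p s) (p s) i j)
        ((vecMulVec (p t) (p t) * Ω t - Ω t * vecMulVec (p t) (p t)) i j) t) ∧
      (vecMulVec (p t) (p t) * J - J * vecMulVec (p t) (p t)
        = vecMulVec (p t) (J.mulVec (p t)) - vecMulVec (J.mulVec (p t)) (p t)) ∧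
      (∀ i j, HasDerivAt (fun s => M s i j)
        ((M t * Ω t - Ω t * M t
          + (vecMulVec (p t) (p t) * J - J * vecMulVec (p t) (p t))) i j) t) :=
  stmt_16_general n J hJ Ω M p hΩskew hM hp
end

section
/- Let ε ≠ 0 be real, J a real symmetric n×n matrix, W a real orthogonal n×n matrix, p ∈ ℝⁿ, and set p₊ := Wᵀp, P := ppᵀ, P₊ := p₊p₊ᵀ. Then: P₊ = WᵀPW; PWJ − JWᵀP = p(Jp₊)ᵀ − (Jp₊)pᵀ; and JPW − WᵀPJ = −(p₊(Jp)ᵀ − (Jp)p₊ᵀ). Consequently, the discrete rigid body equations Mₖ = (1/ε)(WJ − JWᵀ) − (ε/2)(PWJ − JWᵀP), Mₖ₊₁ = (1/ε)(JW − WᵀJ) − (ε/2)(JPW − WᵀPJ) specialize, for P = ppᵀ, to the discrete Clebsch equations Mₖ = (1/ε)(WJ − JWᵀ) − (ε/2)·p∧(Jp₊) and Mₖ₊₁ = (1/ε)(JW − WᵀJ) + (ε/2)·p₊∧(Jp). -/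
open Matrix

lemma vmv_mul {n : ℕ} (a b : Fin n → ℝ) (M : Matrix (Fin n) (Fin n) ℝ) :
    vecMulVec a b * M = vecMulVec a (Mᵀ.mulVec b) := by
  ext i j
  simp [mul_apply, vecMulVec_apply, mulVec, dotProduct, Finset.mul_sum, mul_assoc]
  exact Finset.sum_congr rfl fun k _ => by ring

lemma mul_vmv {n : ℕ} (a b : Fin n → ℝ) (M : Matrix (Fin n) (Fin n) ℝ) :
    M * vecMulVec a b = vecMulVec (M.mulVec a) b := by
  ext i j
  simp [mul_apply, vecMulVec_apply, mulVec, dotProduct, Finset.sum_mul, mul_assoc]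

/-- For `p₊ := Wᵀp`, `P := ppᵀ`, `P₊ := p₊p₊ᵀ` (with `W` orthogonal, `J` symmetric):
`P₊ = WᵀPW`, `PWJ − JWᵀP = p(Jp₊)ᵀ − (Jp₊)pᵀ`, `JPW − WᵀPJ = −(p₊(Jp)ᵀ − (Jp)p₊ᵀ)`,
and consequently the discrete rigid body equations specialize, for `P = ppᵀ`, to the
discrete Clebsch equations `M = (1/ε)(WJ − JWᵀ) − (ε/2)·p∧(Jp₊)` and
`M₊ = (1/ε)(JW − WᵀJ) + (ε/2)·p₊∧(Jp)`. -/
theorem stmt_17 (n : ℕ) (ε : ℝ) (hε : ε ≠ 0)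
    (J : Matrix (Fin n) (Fin n) ℝ) (hJ : Jᵀ = J)
    (W : Matrix (Fin n) (Fin n) ℝ) (horth : Wᵀ * W = 1 ∧ W * Wᵀ = 1)
    (p : Fin n → ℝ) (pp : Fin n → ℝ) (hpp : pp = Wᵀ.mulVec p)
    (P Pp : Matrix (Fin n) (Fin n) ℝ)
    (hP : P = vecMulVec p p) (hPp : Pp = vecMulVec pp pp) :
    (Pp = Wᵀ * P * W) ∧
    (P * W * J - J * Wᵀ * P
      = vecMulVec p (J.mulVec pp) - vecMulVec (J.mulVec pp) p) ∧
    (J * P * W - Wᵀ * P * J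
      = -(vecMulVec pp (J.mulVec p) - vecMulVec (J.mulVec p) pp)) ∧
    ((1 / ε) • (W * J - J * Wᵀ) - (ε / 2) • (P * W * J - J * Wᵀ * P)
      = (1 / ε) • (W * J - J * Wᵀ)
        - (ε / 2) • (vecMulVec p (J.mulVec pp) - vecMulVec (J.mulVec pp) p)) ∧
    ((1 / ε) • (J * W - Wᵀ * J) - (ε / 2) • (J * P * W - Wᵀ * P * J)
      = (1 / ε) • (J * W - Wᵀ * J)
        + (ε / 2) • (vecMulVec pp (J.mulVec p) - vecMulVec (J.mulVec p) pp)) := by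
  subst hP hPp hpp
  have h1 : vecMulVec (Wᵀ.mulVec p) (Wᵀ.mulVec p) = Wᵀ * vecMulVec p p * W := by
    rw [mul_vmv, vmv_mul]
  have h2 : vecMulVec p p * W * J - J * Wᵀ * vecMulVec p p
      = vecMulVec p (J.mulVec (Wᵀ.mulVec p)) - vecMulVec (J.mulVec (Wᵀ.mulVec p)) p := by
    rw [vmv_mul, vmv_mul, mul_vmv, hJ, ← mulVec_mulVec]
  have h3 : J * vecMulVec p p * W - Wᵀ * vecMulVec p p * J
      = -(vecMulVec (Wᵀ.mulVec p) (J.mulVec p) - vecMulVec (J.mulVec p) (Wᵀ.mulVec p)) := by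
    rw [mul_vmv, vmv_mul, mul_vmv, vmv_mul, hJ]
    abel
  exact ⟨h1, h2, h3, by rw [h2], by rw [h3]; module⟩
end
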